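/- arXiv:1112.3323 — 6 statements merged into one kernel-verified Lean document; each statement's English description precedes it below -/
import Mathlib

section
/- Suppose D: U → ([d] → A) is a derivation function, and for every subset S' of keys with |S'| = k' ≤ k there exist i ∈ [d] and x ∈ S' such that D_i(x) ≠ D_i(y) for all y ∈ S' \ {x}. Then for every set S of k keys, the derivation incidence matrix M_{D,S} has full row rank over GF(2). -/
/-! If a vanishing combination of the rows had nonempty support `T`, peel a key `x ∈ T`
with a character `D_i(x)` shared by no other key of `T`: the column `(i, D_i(x))` meets the
support only in row `x`, so the coefficient of `x` vanishes. -/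

theorem linearIndependent_of_exists_isolating_coord {R ι κ : Type*} [Ring R] {v : ι → κ → R}
    (hv : ∀ T : Finset ι, T.Nonempty →
      ∃ x ∈ T, ∃ p : κ, IsUnit (v x p) ∧ ∀ y ∈ T, y ≠ x → v y p = 0) :
    LinearIndependent R v := by
  rw [linearIndependent_iff]
  intro l hl
  by_contra hl0
  obtain ⟨x, hx, p, hunit, hzero⟩ := hv l.support (Finsupp.support_nonempty_iff.2 hl0)
  have hcoord : l x * v x p = 0 := by
    have := congrFun hl p
    rw [Finsupp.linearCombination_apply, Finsupp.sum, Finset.sum_apply,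
      Finset.sum_eq_single_of_mem x hx fun y hy hyx => by simp [hzero y hy hyx]] at this
    simpa using this
  exact Finsupp.mem_support_iff.1 hx (hunit.mul_left_eq_zero.1 hcoord)

/-- If for every nonempty set S' of at most k keys some key x ∈ S' has a derived character
D_i(x) distinct from D_i(y) for all other y ∈ S', then for every set S of k keys the
derivation incidence matrix (rows indexed by keys, columns by pairs (i,a), entry 1 iff
D_i(x) = a) has full row rank over GF(2), i.e. its rows are linearly independent. -/
theorem stmt_2 {U A : Type*} [DecidableEq A] (d k : ℕ)
    (D : U → Fin d → A)
    (hpeel : ∀ S' : Finset U, S'.card ≤ k → S'.Nonempty →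
      ∃ (i : Fin d) (x : U), x ∈ S' ∧ ∀ y ∈ S', y ≠ x → D y i ≠ D x i)
    (S : Finset U) (hS : S.card = k) :
    LinearIndependent (ZMod 2)
      (fun x : S => fun p : Fin d × A =>
        if D x.1 p.1 = p.2 then (1 : ZMod 2) else 0) := by
  refine linearIndependent_of_exists_isolating_coord fun T hT => ?_
  have hcard : (T.map (Function.Embedding.subtype (· ∈ S))).card ≤ k := by
    rw [Finset.card_map, ← hS]
    exact T.card_le_univ.trans_eq (Fintype.card_coe S)
  obtain ⟨i, _, hxT, hiso⟩ := hpeel _ hcard (hT.map)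
  obtain ⟨x, hx, rfl⟩ := Finset.mem_map.1 hxT
  refine ⟨x, hx, (i, D x i), by simp, fun y hy hyx => ?_⟩
  have hDy : D y i ≠ D x i :=
    hiso y (Finset.mem_map_of_mem _ hy) (Subtype.coe_injective.ne hyx)
  simp [hDy]
end

section
/- For every d ≥ 1 and every set S of k distinct pairs (a,b) ∈ ℕ² with 1 ≤ k ≤ 2d−1, there exists a column c ∈ {0,...,d−1} and a value y such that the number of pairs (a,b) ∈ S with a + b·c = y is odd. Equivalently, there is no bad (2,d,k)-arrangement: it is impossible that for every c ∈ {0,...,d−1} and every y ∈ ℤ, the cardinality of {(a,b) ∈ S : a + b·c = y} is even. -/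
/-!
At a bad column `c`, take the line of `S` that is lowest there, ties broken by smaller slope.
Another line of `S` passes through the same point, and it must be steeper, so it lies strictly
below the chosen line left of `c` and strictly above it right of `c`. Hence the lowest line at
`c` is not lowest at any column left of `c`, and not highest at `c` or at any column right of
`c`. Symmetrically for the highest line at `c`, ties broken by larger slope. The lowest and the
highest lines at the `d` columns are therefore `2d` distinct keys.
-/

open Finset

section Ring

variable {R : Type*} [CommRing R]

def lineVal (p : R × R) (z : R) : R := p.1 + p.2 * z

lemma lineVal_sub_lineVal {p r : R × R} {c : R} (h : lineVal p c = lineVal r c) (z : R) :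
    lineVal r z - lineVal p z = (r.2 - p.2) * (z - c) := by
  unfold lineVal at *
  linear_combination -h

lemma eq_of_lineVal_eq_of_snd_eq {p r : R × R} {c : R} (h : lineVal p c = lineVal r c)
    (hs : p.2 = r.2) : p = r := by
  unfold lineVal at h
  rw [hs, add_left_inj] at h
  exact Prod.ext h hs

variable [DecidableEq R]

def IsBadColumn (S : Finset (R × R)) (c : R) : Prop :=
  ∀ y, Even (S.filter fun p => lineVal p c = y).card

lemma IsBadColumn.exists_ne_lineVal_eq {S : Finset (R × R)} {c : R} {p : R × R}
    (hc : IsBadColumn S c) (hp : p ∈ S) : ∃ r ∈ S, r ≠ p ∧ lineVal p c = lineVal r c := by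
  obtain ⟨k, hk⟩ := hc (lineVal p c)
  set A := S.filter fun q => lineVal q c = lineVal p c
  have hpos : 0 < A.card := card_pos.mpr ⟨p, mem_filter.mpr ⟨hp, rfl⟩⟩
  obtain ⟨r, hr, hrp⟩ := exists_mem_ne (s := A) (by omega) p
  obtain ⟨hrS, hrc⟩ := mem_filter.mp hr
  exact ⟨r, hrS, hrp, hrc.symm⟩

end Ring

section Ordered

variable {R : Type*} [CommRing R] [LinearOrder R]

def lexKey (z : R) (p : R × R) : R ×ₗ R := toLex (lineVal p z, p.2)

variable {S : Finset (R × R)} {c c' : R} {p : R × R}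

lemma IsBadColumn.exists_steeper (hc : IsBadColumn S c) (hp : p ∈ S)
    (hmin : IsMinOn (lexKey c) S p) : ∃ r ∈ S, lineVal p c = lineVal r c ∧ p.2 < r.2 := by
  obtain ⟨r, hr, hrp, hpr⟩ := hc.exists_ne_lineVal_eq hp
  have hle : p.2 ≤ r.2 := by
    rcases Prod.Lex.toLex_le_toLex.mp (isMinOn_iff.mp hmin r hr) with h | h
    · exact absurd hpr h.ne
    · exact h.2
  exact ⟨r, hr, hpr, hle.lt_of_ne fun hs => hrp (eq_of_lineVal_eq_of_snd_eq hpr hs).symm⟩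

lemma IsBadColumn.exists_flatter (hc : IsBadColumn S c) (hp : p ∈ S)
    (hmax : IsMaxOn (lexKey c) S p) : ∃ r ∈ S, lineVal r c = lineVal p c ∧ r.2 < p.2 := by
  obtain ⟨r, hr, hrp, hpr⟩ := hc.exists_ne_lineVal_eq hp
  have hle : r.2 ≤ p.2 := by
    rcases Prod.Lex.toLex_le_toLex.mp (isMaxOn_iff.mp hmax r hr) with h | h
    · exact absurd hpr.symm h.ne
    · exact h.2
  exact ⟨r, hr, hpr.symm, hle.lt_of_ne fun hs => hrp (eq_of_lineVal_eq_of_snd_eq hpr.symm hs)⟩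

variable [IsStrictOrderedRing R]

lemma lexKey_lt_lexKey_of_le {r : R × R} {z : R} (h : lineVal p c = lineVal r c)
    (hs : p.2 < r.2) (hz : c ≤ z) : lexKey z p < lexKey z r := by
  rcases hz.eq_or_lt with rfl | hz
  · exact Prod.Lex.toLex_lt_toLex.mpr (Or.inr ⟨h, hs⟩)
  · have := lineVal_sub_lineVal h z
    exact Prod.Lex.toLex_lt_toLex.mpr
      (Or.inl (by nlinarith [mul_pos (sub_pos.2 hs) (sub_pos.2 hz)]))

lemma lexKey_lt_lexKey_of_lt {r : R × R} {z : R} (h : lineVal p c = lineVal r c)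
    (hs : p.2 < r.2) (hz : z < c) : lexKey z r < lexKey z p := by
  have := lineVal_sub_lineVal h z
  exact Prod.Lex.toLex_lt_toLex.mpr
    (Or.inl (by nlinarith [mul_neg_of_pos_of_neg (sub_pos.2 hs) (sub_neg.2 hz)]))

lemma le_of_isMinOn_of_isMinOn (hc' : IsBadColumn S c') (hp : p ∈ S)
    (hmin : IsMinOn (lexKey c) S p) (hmin' : IsMinOn (lexKey c') S p) : c' ≤ c := by
  by_contra! hlt
  obtain ⟨r, hr, hpr, hs⟩ := hc'.exists_steeper hp hmin'
  exact (lexKey_lt_lexKey_of_lt hpr hs hlt).not_ge (isMinOn_iff.mp hmin r hr)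

lemma le_of_isMaxOn_of_isMaxOn (hc' : IsBadColumn S c') (hp : p ∈ S)
    (hmax : IsMaxOn (lexKey c) S p) (hmax' : IsMaxOn (lexKey c') S p) : c' ≤ c := by
  by_contra! hlt
  obtain ⟨r, hr, hrp, hs⟩ := hc'.exists_flatter hp hmax'
  exact (lexKey_lt_lexKey_of_lt hrp hs hlt).not_ge (isMaxOn_iff.mp hmax r hr)

lemma not_isMaxOn_of_isMinOn (hc : IsBadColumn S c) (hc' : IsBadColumn S c') (hp : p ∈ S)
    (hmin : IsMinOn (lexKey c) S p) : ¬ IsMaxOn (lexKey c') S p := by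
  intro hmax
  rcases le_or_gt c c' with hcc' | hc'c
  · obtain ⟨r, hr, hpr, hs⟩ := hc.exists_steeper hp hmin
    exact (lexKey_lt_lexKey_of_le hpr hs hcc').not_ge (isMaxOn_iff.mp hmax r hr)
  · obtain ⟨r, hr, hrp, hs⟩ := hc'.exists_flatter hp hmax
    exact (lexKey_lt_lexKey_of_le hrp hs hc'c.le).not_ge (isMinOn_iff.mp hmin r hr)

theorem two_mul_card_le_card_of_isBadColumn (hS : S.Nonempty) {C : Finset R}
    (hC : ∀ c ∈ C, IsBadColumn S c) : 2 * C.card ≤ S.card := by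
  choose lo hlo hlomin using fun c => S.exists_min_image (lexKey c) hS
  choose hi hhi hhimax using fun c => S.exists_max_image (lexKey c) hS
  have hmin c : IsMinOn (lexKey c) S (lo c) := isMinOn_iff.mpr (hlomin c)
  have hmax c : IsMaxOn (lexKey c) S (hi c) := isMaxOn_iff.mpr (hhimax c)
  calc 2 * C.card = (C.disjSum C).card := by rw [card_disjSum, two_mul]
    _ ≤ S.card := by
      refine card_le_card_of_injOn (Sum.elim lo hi) ?_ ?_
      · rintro (c | c) _ <;> simp [hlo, hhi]
      · rintro (c | c) hc (c' | c') hc' h <;>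
          simp only [mem_coe, inl_mem_disjSum, inr_mem_disjSum, Sum.elim_inl, Sum.elim_inr,
            Sum.inl.injEq, Sum.inr.injEq, reduceCtorEq] at hc hc' h ⊢
        · exact le_antisymm (le_of_isMinOn_of_isMinOn (hC c hc) (hlo c') (hmin c') (h ▸ hmin c))
            (le_of_isMinOn_of_isMinOn (hC c' hc') (hlo c') (h ▸ hmin c) (hmin c'))
        · exact not_isMaxOn_of_isMinOn (hC c hc) (hC c' hc') (hlo c) (hmin c) (h ▸ hmax c')
        · exact not_isMaxOn_of_isMinOn (hC c' hc') (hC c hc) (hlo c') (hmin c') (h ▸ hmax c)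
        · exact le_antisymm (le_of_isMaxOn_of_isMaxOn (hC c hc) (hhi c') (hmax c') (h ▸ hmax c))
            (le_of_isMaxOn_of_isMaxOn (hC c' hc') (hhi c') (h ▸ hmax c) (hmax c'))

end Ordered

theorem stmt_5_general (d : ℕ) (S : Finset (ℕ × ℕ))
    (h1 : 1 ≤ S.card) (h2 : S.card ≤ 2 * d - 1) :
    ∃ c : ℕ, c < d ∧ ∃ y : ℤ,
      ¬ Even ((S.filter (fun p => (p.1 : ℤ) + (p.2 : ℤ) * (c : ℤ) = y)).card) := by
  by_contra! hbad
  let ι : ℕ × ℕ ↪ ℤ × ℤ := Nat.castEmbedding.prodMap Nat.castEmbedding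
  have hbound := two_mul_card_le_card_of_isBadColumn (S := S.map ι)
    (C := (range d).map Nat.castEmbedding) (by simpa [← card_pos] using h1) ?_
  · simp only [card_map, card_range] at hbound
    omega
  · simp only [mem_map, mem_range]
    rintro _ ⟨c, hc, rfl⟩ y
    rw [filter_map, card_map]
    exact hbad c hc y

/-- There is no bad (2,d,k)-arrangement for 1 ≤ k ≤ 2d−1: for any set S of k distinct
keys (a,b) ∈ ℕ², some column c ∈ {0,...,d−1} has a point y met by an odd number of the
lines z ↦ a + b·z of S. -/
theorem stmt_5 (d : ℕ) (hd : 1 ≤ d) (S : Finset (ℕ × ℕ))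
    (h1 : 1 ≤ S.card) (h2 : S.card ≤ 2 * d - 1) :
    ∃ c : ℕ, c < d ∧ ∃ y : ℤ,
      ¬ Even ((S.filter (fun p => (p.1 : ℤ) + (p.2 : ℤ) * (c : ℤ) = y)).card) :=
  stmt_5_general d S h1 h2
end

section
/- Suppose C is a set of k distinct polynomials of degree at most q−1 with integer coefficients such that each of the columns 0,...,d−1 is bad for C (every point on those columns lies on an even number of curves of C). Let Q be a polynomial of degree q−1 with integer coefficients vanishing at d, d+1, ..., d+q−2, chosen so that C' = {P + Q : P ∈ C} is disjoint from C. Then each of the columns 0,...,d+q−2 is bad for C ∪ C', and |C ∪ C'| = 2k. -/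
/-!
Translating by `Q` is injective, so on column `c` the curve `P + Q` passes through `y` exactly when
`P` passes through `y - Q(c)`; the number of curves of `C ∪ (C + Q)` through `(c, y)` is therefore
the number of curves of `C` through `(c, y)` plus the number through `(c, y - Q(c))`. On the old bad
columns both summands are even, and on the columns `d, …, d+q-2`, where `Q` vanishes, the two
summands coincide.
-/

namespace Polynomial

def IsBadColumn (F : Finset ℤ[X]) (c : ℤ) : Prop :=
  ∀ y : ℤ, Even (F.filter (fun P => P.eval c = y)).card

variable {C : Finset ℤ[X]} {Q : ℤ[X]}

theorem card_filter_eval_image_add (C : Finset ℤ[X]) (Q : ℤ[X]) (c y : ℤ) :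
    ((C.image (fun P => P + Q)).filter (fun P => P.eval c = y)).card =
      (C.filter (fun P => P.eval c = y - Q.eval c)).card := by
  rw [Finset.filter_image, Finset.card_image_of_injective _ (add_left_injective Q)]
  congr 1
  ext P
  simp only [eval_add, eq_sub_iff_add_eq]

theorem card_filter_eval_union_image_add (hdisj : Disjoint C (C.image (fun P => P + Q)))
    (c y : ℤ) :
    ((C ∪ C.image (fun P => P + Q)).filter (fun P => P.eval c = y)).card =
      (C.filter (fun P => P.eval c = y)).card +
        (C.filter (fun P => P.eval c = y - Q.eval c)).card := by
  rw [Finset.filter_union, Finset.card_union_of_disjoint (Finset.disjoint_filter_filter hdisj),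
    card_filter_eval_image_add]

theorem IsBadColumn.union_image_add (hdisj : Disjoint C (C.image (fun P => P + Q))) {c : ℤ}
    (hc : IsBadColumn C c) : IsBadColumn (C ∪ C.image (fun P => P + Q)) c := fun y => by
  rw [card_filter_eval_union_image_add hdisj]
  exact (hc y).add (hc _)

theorem isBadColumn_union_image_add_of_eval_eq_zero
    (hdisj : Disjoint C (C.image (fun P => P + Q))) {c : ℤ} (hQ : Q.eval c = 0) :
    IsBadColumn (C ∪ C.image (fun P => P + Q)) c := fun y => by
  rw [card_filter_eval_union_image_add hdisj, hQ, sub_zero]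
  exact Even.add_self _

theorem card_union_image_add (hdisj : Disjoint C (C.image (fun P => P + Q))) :
    (C ∪ C.image (fun P => P + Q)).card = 2 * C.card := by
  rw [Finset.card_union_of_disjoint hdisj, Finset.card_image_of_injective _ (add_left_injective Q),
    two_mul]

end Polynomial

open Polynomial

theorem stmt_8_general (q d k : ℕ)
    (C : Finset (Polynomial ℤ)) (hcard : C.card = k)
    (hbad : ∀ c : ℤ, 0 ≤ c → c ≤ (d : ℤ) - 1 → ∀ y : ℤ,
      Even ((C.filter (fun P => P.eval c = y)).card))
    (Q : Polynomial ℤ)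
    (hQzero : ∀ i : ℕ, i < q - 1 → Q.eval ((d : ℤ) + (i : ℤ)) = 0)
    (hdisj : Disjoint C (C.image (fun P => P + Q))) :
    (C ∪ C.image (fun P => P + Q)).card = 2 * k ∧
    ∀ c : ℤ, 0 ≤ c → c ≤ (d : ℤ) + (q : ℤ) - 2 → ∀ y : ℤ,
      Even (((C ∪ C.image (fun P => P + Q)).filter (fun P => P.eval c = y)).card) := by
  refine ⟨hcard ▸ card_union_image_add hdisj, fun c hc0 hc => ?_⟩
  by_cases hcd : c ≤ (d : ℤ) - 1
  · exact IsBadColumn.union_image_add hdisj (hbad c hc0 hcd)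
  · obtain ⟨i, rfl⟩ : ∃ i : ℕ, c = (d : ℤ) + i := ⟨(c - d).toNat, by omega⟩
    exact isBadColumn_union_image_add_of_eval_eq_zero hdisj (hQzero i (by omega))

/-- If columns 0,...,d−1 are bad for a set C of k polynomials of degree ≤ q−1 over ℤ, and
Q is a polynomial of degree q−1 vanishing at d,...,d+q−2 such that C' = {P + Q : P ∈ C}
is disjoint from C, then C ∪ C' has 2k elements and columns 0,...,d+q−2 are bad for it. -/
theorem stmt_8 (q d k : ℕ) (hq : 2 ≤ q) (hd : 1 ≤ d)
    (C : Finset (Polynomial ℤ)) (hcard : C.card = k)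
    (hdeg : ∀ P ∈ C, P.natDegree ≤ q - 1)
    (hbad : ∀ c : ℤ, 0 ≤ c → c ≤ (d : ℤ) - 1 → ∀ y : ℤ,
      Even ((C.filter (fun P => P.eval c = y)).card))
    (Q : Polynomial ℤ) (hQdeg : Q.natDegree = q - 1)
    (hQzero : ∀ i : ℕ, i < q - 1 → Q.eval ((d : ℤ) + (i : ℤ)) = 0)
    (hdisj : Disjoint C (C.image (fun P => P + Q))) :
    (C ∪ C.image (fun P => P + Q)).card = 2 * k ∧
    ∀ c : ℤ, 0 ≤ c → c ≤ (d : ℤ) + (q : ℤ) - 2 → ∀ y : ℤ,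
      Even (((C ∪ C.image (fun P => P + Q)).filter (fun P => P.eval c = y)).card) :=
  stmt_8_general q d k C hcard hbad Q hQzero hdisj
end

section
/- For every d ≥ 1 there exists a set S of 2^d distinct keys (a,b) with a, b ∈ [n], where n = max{2^{d−1}(d−2)+2, 3}, such that for every c ∈ {0,...,d−1} and every y ∈ ℤ, the number of keys (a,b) ∈ S with a + b·c = y is even. Consequently, there exists a bad (2,d,2^d)-arrangement over [n]². -/
/-!
To a subset `T ⊆ {0, …, d-1}` attach the key `(∑_{j ∈ T} j·w_j, ∑_{j ∉ T} w_j)`, where `w_0 = 1`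
and `w_j = 2^(j-1)` for `j ≥ 1`. Moving `c` out of `T` lowers the first coordinate by `c·w_c` and
raises the second by `w_c`, so the line of the key keeps its value at column `c`: toggling `c`
pairs up the keys through each point of column `c`. The keys are distinct because the weights
`(j+1)·w_j` are superincreasing, and the largest coordinates, `(d-2)·2^(d-1) + 1` and `2^(d-1)`,
stay below `n`.
-/

open Finset

section Superincreasing

variable {f : ℕ → ℕ}

theorem sum_lt_sum_of_superincreasing (hf : ∀ j, ∑ i ∈ range j, f i < f j) {d : ℕ}
    {T T' : Finset ℕ} (hT' : T' ⊆ range (d + 1)) (hdT : d ∈ T) (hdT' : d ∉ T') :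
    ∑ i ∈ T', f i < ∑ i ∈ T, f i := by
  rw [range_add_one, subset_insert_iff_of_notMem hdT'] at hT'
  calc ∑ i ∈ T', f i ≤ ∑ i ∈ range d, f i := sum_le_sum_of_subset hT'
    _ < f d := hf d
    _ ≤ ∑ i ∈ T, f i := single_le_sum (fun _ _ => Nat.zero_le _) hdT

theorem injOn_sum_of_superincreasing (hf : ∀ j, ∑ i ∈ range j, f i < f j) (d : ℕ) :
    Set.InjOn (fun T : Finset ℕ => ∑ i ∈ T, f i) (range d).powerset := by
  induction d with
  | zero =>
    intro T hT T' hT' _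
    simp_all
  | succ d ih =>
    intro T hT T' hT' h
    rw [mem_coe, mem_powerset] at hT hT'
    by_cases hdT : d ∈ T <;> by_cases hdT' : d ∈ T'
    · rw [range_add_one, subset_insert_iff, ← mem_powerset] at hT hT'
      have h_erase : ∑ i ∈ T.erase d, f i = ∑ i ∈ T'.erase d, f i :=
        add_right_cancel (b := f d) (by rwa [sum_erase_add T f hdT, sum_erase_add T' f hdT'])
      rw [← insert_erase hdT, ← insert_erase hdT', ih hT hT' h_erase]
    · exact absurd h (sum_lt_sum_of_superincreasing hf hT' hdT hdT').ne'
    · exact absurd h (sum_lt_sum_of_superincreasing hf hT hdT' hdT).ne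
    · rw [range_add_one, subset_insert_iff_of_notMem hdT, ← mem_powerset] at hT
      rw [range_add_one, subset_insert_iff_of_notMem hdT', ← mem_powerset] at hT'
      exact ih hT hT' h

end Superincreasing

def subsetKey (w : ℕ → ℕ) (d : ℕ) (T : Finset ℕ) : ℕ × ℕ :=
  (∑ j ∈ T, j * w j, ∑ j ∈ range d \ T, w j)

section SubsetKey

variable (w : ℕ → ℕ) {d : ℕ}

theorem subsetKey_erase_line {c : ℕ} {T : Finset ℕ} (hT : T ⊆ range d) (hcT : c ∈ T) :
    (subsetKey w d (T.erase c)).1 + (subsetKey w d (T.erase c)).2 * c =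
      (subsetKey w d T).1 + (subsetKey w d T).2 * c := by
  simp only [subsetKey, sdiff_erase (hT hcT), ← sum_erase_add T _ hcT,
    sum_insert (fun h => (mem_sdiff.1 h).2 hcT)]
  ring

theorem even_card_filter_subsetKey_line {c : ℕ} (hc : c < d) (y : ℤ) :
    Even #{T ∈ (range d).powerset |
      ((subsetKey w d T).1 : ℤ) + ((subsetKey w d T).2 : ℤ) * (c : ℤ) = y} := by
  set G := {T ∈ (range d).powerset |
    ((subsetKey w d T).1 : ℤ) + ((subsetKey w d T).2 : ℤ) * (c : ℤ) = y}
  have h_toggle : #{T ∈ G | c ∈ T} = #{T ∈ G | c ∉ T} := by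
    refine card_bij' (fun T _ => T.erase c) (fun T _ => insert c T) ?_ ?_ ?_ ?_
    · intro T hT
      simp only [G, mem_filter, mem_powerset] at hT ⊢
      obtain ⟨⟨hTd, hTy⟩, hcT⟩ := hT
      refine ⟨⟨(erase_subset c T).trans hTd, ?_⟩, notMem_erase c T⟩
      rw [← hTy]
      exact_mod_cast subsetKey_erase_line w hTd hcT
    · intro T hT
      simp only [G, mem_filter, mem_powerset] at hT ⊢
      obtain ⟨⟨hTd, hTy⟩, hcT⟩ := hT
      have hcTd : insert c T ⊆ range d := insert_subset (mem_range.2 hc) hTd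
      refine ⟨⟨hcTd, ?_⟩, mem_insert_self c T⟩
      have := subsetKey_erase_line w hcTd (mem_insert_self c T)
      rw [erase_insert hcT] at this
      rw [← hTy]
      exact_mod_cast this.symm
    · intro T hT
      exact insert_erase (mem_filter.1 hT).2
    · intro T hT
      exact erase_insert (mem_filter.1 hT).2
  exact ⟨#{T ∈ G | c ∈ T}, by rw [← card_filter_add_card_filter_not (c ∈ ·), h_toggle]⟩

theorem subsetKey_injOn (hw : ∀ j, ∑ i ∈ range j, (i + 1) * w i < (j + 1) * w j) (d : ℕ) :
    Set.InjOn (subsetKey w d) (range d).powerset := by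
  intro T hT T' hT' h
  simp only [subsetKey, Prod.mk.injEq] at h
  have h_weight : ∑ j ∈ T, w j = ∑ j ∈ T', w j := by
    have := sum_sdiff (mem_powerset.1 hT) (f := w)
    rw [← sum_sdiff (mem_powerset.1 hT') (f := w)] at this
    omega
  refine injOn_sum_of_superincreasing hw d hT hT' ?_
  simp only [add_mul, one_mul, sum_add_distrib, h.1, h_weight]

end SubsetKey

def weight : ℕ → ℕ
  | 0 => 1
  | j + 1 => 2 ^ j

theorem sum_range_weight (m : ℕ) : ∑ j ∈ range (m + 1), weight j = 2 ^ m := by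
  induction m with
  | zero => rfl
  | succ m ih => rw [sum_range_succ, ih, weight, ← two_mul, pow_succ']

theorem sum_range_mul_weight_add (m : ℕ) :
    ∑ j ∈ range (m + 1), j * weight j + 2 ^ m = m * 2 ^ m + 1 := by
  induction m with
  | zero => rfl
  | succ m ih =>
    rw [sum_range_succ, weight, pow_succ]
    linear_combination ih

theorem sum_range_succ_mul_weight_lt (j : ℕ) :
    ∑ i ∈ range j, (i + 1) * weight i < (j + 1) * weight j := by
  cases j with
  | zero => simp [weight]
  | succ m =>
    rw [sum_congr rfl fun i _ => add_one_mul i (weight i), sum_add_distrib, sum_range_weight,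
      sum_range_mul_weight_add, weight]
    linarith [Nat.one_le_two_pow (n := m)]

theorem sum_range_mul_weight_lt (d : ℕ) :
    ∑ j ∈ range d, j * weight j < max (2 ^ (d - 1) * (d - 2) + 2) 3 := by
  rcases d with _ | _ | m
  · simp
  · simp [weight]
  · have h := sum_range_mul_weight_add (m + 1)
    simp only [Nat.add_sub_cancel, show m + 1 + 1 - 2 = m by omega]
    rw [pow_succ] at h ⊢
    exact lt_max_of_lt_left (by linarith)

theorem sum_range_weight_lt (d : ℕ) :
    ∑ j ∈ range d, weight j < max (2 ^ (d - 1) * (d - 2) + 2) 3 := by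
  rcases d with _ | _ | _ | m
  · simp
  · simp [weight]
  · simp [sum_range_weight]
  · rw [sum_range_weight]
    simp only [show m + 3 - 1 = m + 2 by omega, show m + 3 - 2 = m + 1 by omega]
    exact lt_max_of_lt_left (by nlinarith [Nat.one_le_two_pow (n := m + 2)])

theorem stmt_10_general (d : ℕ) :
    ∃ S : Finset (ℕ × ℕ), S.card = 2 ^ d ∧
      (∀ p ∈ S, p.1 < max (2 ^ (d - 1) * (d - 2) + 2) 3 ∧
        p.2 < max (2 ^ (d - 1) * (d - 2) + 2) 3) ∧
      ∀ c : ℕ, c < d → ∀ y : ℤ,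
        Even ((S.filter (fun p => (p.1 : ℤ) + (p.2 : ℤ) * (c : ℤ) = y)).card) := by
  have h_inj := subsetKey_injOn weight sum_range_succ_mul_weight_lt d
  refine ⟨(range d).powerset.image (subsetKey weight d), ?_, ?_, ?_⟩
  · rw [card_image_of_injOn h_inj, card_powerset, card_range]
  · simp only [mem_image, mem_powerset, forall_exists_index, and_imp]
    rintro _ T hT rfl
    exact ⟨(sum_le_sum_of_subset hT).trans_lt (sum_range_mul_weight_lt d),
      (sum_le_sum_of_subset sdiff_subset).trans_lt (sum_range_weight_lt d)⟩
  · intro c hc y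
    rw [filter_image, card_image_of_injOn (h_inj.mono (filter_subset _ _))]
    exact even_card_filter_subsetKey_line weight hc y

/-- For every d ≥ 1 there is a bad (2,d,2^d)-arrangement over [n]² with
n = max(2^{d−1}(d−2)+2, 3): a set of 2^d distinct keys (a,b) with a,b < n such that for
every column c ∈ {0,...,d−1} and every y, an even number of the lines z ↦ a + b·z of the
set pass through (c,y). -/
theorem stmt_10 (d : ℕ) (hd : 1 ≤ d) :
    ∃ S : Finset (ℕ × ℕ), S.card = 2 ^ d ∧
      (∀ p ∈ S, p.1 < max (2 ^ (d - 1) * (d - 2) + 2) 3 ∧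
        p.2 < max (2 ^ (d - 1) * (d - 2) + 2) 3) ∧
      ∀ c : ℕ, c < d → ∀ y : ℤ,
        Even ((S.filter (fun p => (p.1 : ℤ) + (p.2 : ℤ) * (c : ℤ) = y)).card) :=
  stmt_10_general d
end

section
/- Let C be a set of k distinct polynomials of degree at most q−1 (integer coefficients) such that columns 0,...,q−1 are all bad for C. Then for each column c ∈ {0,...,q−1} there exist at least k/2 intersections on column c (a partition of C into pairs agreeing at c), and additionally there exist at least ⌈k/4⌉ further intersection points (pairs of distinct curves agreeing at some real point) each located either strictly between consecutive integer columns in [0, q−1] or on a column other than the last, and distinct from the chosen k/2 per-column intersections. -/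
/-!
Choose for every column `c` a pairing `F c` of the curves into pairs that agree at `c`, such
that `F (c + 1)` keeps every pair of `F c` that still agrees at `c + 1`. Two distinct curves of
degree at most `q - 1` cannot agree on all `q` columns, so every curve changes partner in some
slab `[c, c + 1]`.

Fix a slab and a pair `{x, l x}` of `l = F c` that breaks at `c + 1`, with `x` its upper end
there. The curves at height `≥ v₁ x` on column `c + 1` are paired by `F (c + 1)`, and those
whose `l`-partner is also that high are paired by `l`; so an even number of `l`-pairs pass
downwards through the height `v₁ x`, and some other pair `{x', l x'}` does. Comparing `x` with
`x'` on column `c` gives either a meeting at `c` of two curves that are not `l`-partners, or two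
curves whose order is reversed between `c` and `c + 1`, hence meet strictly inside the slab; one
of the two curves is `x` or `l x`. Each such intersection is charged by at most two upper ends
and each upper end accounts for two partner changes, which gives at least `k / 4` intersections.
-/

open Finset Polynomial

section Pairing

variable {α β γ : Type*}

structure IsPairing (s : Finset α) (v : α → β) (f : α → α) : Prop where
  mapsTo : ∀ x ∈ s, f x ∈ s
  ne : ∀ x ∈ s, f x ≠ x
  invol : ∀ x ∈ s, f (f x) = x
  comp_eq : ∀ x ∈ s, v (f x) = v x

theorem even_card_filter_sdiff [DecidableEq α] {s t : Finset α} (p : α → Prop) [DecidablePred p]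
    (hts : t ⊆ s) (hs : Even #{x ∈ s | p x}) (ht : Even #{x ∈ t | p x}) :
    Even #{x ∈ s \ t | p x} := by
  have : {x ∈ s \ t | p x} = {x ∈ s | p x} \ {x ∈ t | p x} := by
    ext x
    simp only [mem_filter, mem_sdiff]
    tauto
  rw [this, card_sdiff_of_subset (filter_subset_filter p hts)]
  exact hs.tsub ht

namespace IsPairing

variable {s t : Finset α} {v : α → β} {f g : α → α}

theorem even_card (h : IsPairing s v f) : Even #s := by
  rw [← ZMod.natCast_eq_zero_iff_even, cast_card]
  exact sum_involution (fun x _ => f x) (fun _ _ => by decide) (fun x hx _ => h.ne x hx)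
    h.mapsTo h.invol

theorem of_subset (h : IsPairing s v f) (hts : t ⊆ s) (hf : ∀ x ∈ t, f x ∈ t) :
    IsPairing t v f :=
  ⟨hf, fun x hx => h.ne x (hts hx), fun x hx => h.invol x (hts hx),
    fun x hx => h.comp_eq x (hts hx)⟩

theorem even_card_filter [DecidableEq β] (h : IsPairing s v f) (y : β) :
    Even #{x ∈ s | v x = y} := by
  refine (h.of_subset (filter_subset _ s) fun x hx => ?_).even_card
  rw [mem_filter] at hx ⊢
  exact ⟨h.mapsTo x hx.1, (h.comp_eq x hx.1).trans hx.2⟩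

theorem filter_comp_eq [DecidableEq γ] (h : IsPairing s v f) (w : α → γ) :
    IsPairing {x ∈ s | w (f x) = w x} w f where
  mapsTo x hx := by
    rw [mem_filter] at hx ⊢
    exact ⟨h.mapsTo x hx.1, by rw [h.invol x hx.1, hx.2]⟩
  ne x hx := h.ne x (mem_filter.1 hx).1
  invol x hx := h.invol x (mem_filter.1 hx).1
  comp_eq x hx := (mem_filter.1 hx).2

theorem piecewise [DecidableEq α] (hf : IsPairing s v f) (hg : IsPairing t v g)
    (hst : Disjoint s t) : IsPairing (s ∪ t) v (s.piecewise f g) := by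
  have ht : ∀ x ∈ t, x ∉ s := fun x hx hxs => disjoint_left.1 hst hxs hx
  refine ⟨fun x hx => ?_, fun x hx => ?_, fun x hx => ?_, fun x hx => ?_⟩ <;>
    rcases mem_union.1 hx with hx | hx
  all_goals first
    | rw [piecewise_eq_of_mem _ _ _ hx]
    | rw [piecewise_eq_of_notMem _ _ _ (ht x hx)]
  · exact mem_union_left _ (hf.mapsTo x hx)
  · exact mem_union_right _ (hg.mapsTo x hx)
  · exact hf.ne x hx
  · exact hg.ne x hx
  · rw [piecewise_eq_of_mem _ _ _ (hf.mapsTo x hx), hf.invol x hx]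
  · rw [piecewise_eq_of_notMem _ _ _ (ht _ (hg.mapsTo x hx)), hg.invol x hx]
  · exact hf.comp_eq x hx
  · exact hg.comp_eq x hx

theorem swap [DecidableEq α] {x y : α} (hxy : x ≠ y) (hv : v x = v y) :
    IsPairing {x, y} v (Equiv.swap x y) := by
  refine ⟨?_, ?_, fun z _ => Equiv.swap_apply_self x y z, ?_⟩ <;> simp [hxy, hxy.symm, hv]

end IsPairing

theorem exists_isPairing [DecidableEq α] [DecidableEq β] (v : α → β) (s : Finset α)
    (hs : ∀ y, Even #{x ∈ s | v x = y}) : ∃ f, IsPairing s v f := by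
  induction s using Finset.strongInduction with | H s ih => ?_
  obtain rfl | ⟨x, hx⟩ := s.eq_empty_or_nonempty
  · exact ⟨id, ⟨by simp, by simp, by simp, by simp⟩⟩
  obtain ⟨y, hy, hyx⟩ : ∃ y ∈ {z ∈ s | v z = v x}, y ≠ x := by
    refine exists_mem_ne ?_ x
    have hpos : 0 < #{z ∈ s | v z = v x} := card_pos.2 ⟨x, mem_filter.2 ⟨hx, rfl⟩⟩
    have := hs (v x)
    rw [Nat.even_iff] at this
    omega
  obtain ⟨hys, hyv⟩ := mem_filter.1 hy
  have hxy : IsPairing {x, y} v (Equiv.swap x y) := .swap hyx.symm hyv.symm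
  have hsub : {x, y} ⊆ s := insert_subset hx (singleton_subset_iff.2 hys)
  obtain ⟨f, hf⟩ := ih (s \ {x, y}) (sdiff_ssubset hsub (insert_nonempty _ _))
    fun z => even_card_filter_sdiff _ hsub (hs z) (hxy.even_card_filter z)
  have := hxy.piecewise hf disjoint_sdiff
  rw [union_sdiff_of_subset hsub] at this
  exact ⟨_, this⟩

theorem IsPairing.exists_extension [DecidableEq α] [DecidableEq β] {s t : Finset α}
    {v : α → β} {g : α → α} (hg : IsPairing t v g) (hts : t ⊆ s)
    (hs : ∀ y, Even #{x ∈ s | v x = y}) : ∃ f, IsPairing s v f ∧ ∀ x ∈ t, f x = g x := by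
  obtain ⟨f, hf⟩ := exists_isPairing v (s \ t)
    fun y => even_card_filter_sdiff _ hts (hs y) (hg.even_card_filter y)
  have := hg.piecewise hf disjoint_sdiff
  rw [union_sdiff_of_subset hts] at this
  exact ⟨_, this, fun x hx => piecewise_eq_of_mem _ _ _ hx⟩

theorem exists_isPairing_chain [DecidableEq α] [DecidableEq β] (s : Finset α) (v : ℕ → α → β)
    (n : ℕ) (hv : ∀ c ≤ n, ∀ y, Even #{x ∈ s | v c x = y}) :
    ∃ F : ℕ → α → α, (∀ c ≤ n, IsPairing s (v c) (F c)) ∧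
      ∀ c < n, ∀ x ∈ s, v (c + 1) (F c x) = v (c + 1) x → F (c + 1) x = F c x := by
  induction n with
  | zero =>
    obtain ⟨f, hf⟩ := exists_isPairing (v 0) s (hv 0 le_rfl)
    exact ⟨fun _ => f, fun c hc => by rwa [Nat.le_zero.1 hc], fun c hc => absurd hc c.not_lt_zero⟩
  | succ n ih =>
    obtain ⟨F, hF, hcopy⟩ := ih fun c hc => hv c (by omega)
    obtain ⟨f, hf, hfF⟩ := ((hF n le_rfl).filter_comp_eq (v (n + 1))).exists_extension
      (filter_subset _ s) (hv (n + 1) le_rfl)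
    refine ⟨Function.update F (n + 1) f, fun c hc => ?_, fun c hc x hx hxc => ?_⟩
    · rcases (show c ≤ n ∨ c = n + 1 by omega) with hc | rfl
      · rw [Function.update_of_ne (by omega)]
        exact hF c hc
      · rwa [Function.update_self]
    · rw [Function.update_of_ne (by omega : c ≠ n + 1)] at hxc ⊢
      rcases (show c < n ∨ c = n by omega) with hc | rfl
      · rw [Function.update_of_ne (by omega)]
        exact hcopy c hc x hx hxc
      · rw [Function.update_self]
        exact hfF x (mem_filter.2 ⟨hx, hxc⟩)

theorem exists_lt_apply_ne_apply_succ {s : Finset α} {v : ℕ → α → β} {F : ℕ → α → α} {n : ℕ}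
    (hF : ∀ c ≤ n, IsPairing s (v c) (F c))
    (hsep : ∀ x ∈ s, ∀ y ∈ s, x ≠ y → ∃ c ≤ n, v c x ≠ v c y) {x : α} (hx : x ∈ s) :
    ∃ c < n, F c x ≠ F (c + 1) x := by
  by_contra! h
  have hconst : ∀ c ≤ n, F c x = F 0 x := by
    intro c hc
    induction c with
    | zero => rfl
    | succ c ih => rw [← h c (by omega), ih (by omega)]
  have hF0 := hF 0 (Nat.zero_le n)
  obtain ⟨c, hc, hne⟩ := hsep x hx (F 0 x) (hF0.mapsTo x hx) (hF0.ne x hx).symm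
  exact hne (by rw [← hconst c hc, (hF c hc).comp_eq x hx])

end Pairing

section Slab

variable {α β : Type*} [LinearOrder α] [LinearOrder β]

def Crosses (v₀ v₁ : α → β) (x y : α) : Prop :=
  v₀ x < v₀ y ∧ v₁ y < v₁ x ∨ v₀ y < v₀ x ∧ v₁ x < v₁ y

/-- With `v₀`, `v₁` the values on columns `c`, `c + 1` and `l` the pairing at `c`: `x` and `y`
meet on column `c` without being partners there, or meet strictly between the two columns. -/
def SlabMeeting (l : α → α) (v₀ v₁ : α → β) (x y : α) : Prop :=
  v₀ x = v₀ y ∧ l x ≠ y ∨ Crosses v₀ v₁ x y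

open Classical in
noncomputable def slabMeetings (s : Finset α) (l : α → α) (v₀ v₁ : α → β) : Finset (α × α) :=
  {p ∈ s ×ˢ s | p.1 < p.2 ∧ SlabMeeting l v₀ v₁ p.1 p.2}

def upperEnd (l : α → α) (v₁ : α → β) (x : α) : α :=
  if v₁ (l x) < v₁ x then x else l x

variable {s : Finset α} {l r : α → α} {v₀ v₁ : α → β}

theorem mem_slabMeetings {p : α × α} :
    p ∈ slabMeetings s l v₀ v₁ ↔ p.1 ∈ s ∧ p.2 ∈ s ∧ p.1 < p.2 ∧ SlabMeeting l v₀ v₁ p.1 p.2 := by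
  simp [slabMeetings, and_assoc]

theorem exists_mem_slabMeetings {x y : α} (hx : x ∈ s) (hy : y ∈ s) (hxy : x ≠ y)
    (h : SlabMeeting l v₀ v₁ x y) (h' : SlabMeeting l v₀ v₁ y x) :
    ∃ p ∈ slabMeetings s l v₀ v₁, x = p.1 ∨ x = p.2 := by
  rcases hxy.lt_or_gt with hlt | hlt
  · exact ⟨(x, y), mem_slabMeetings.2 ⟨hx, hy, hlt, h⟩, Or.inl rfl⟩
  · exact ⟨(y, x), mem_slabMeetings.2 ⟨hy, hx, hlt, h'⟩, Or.inr rfl⟩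

theorem card_filter_apply_ne_le (hl : IsPairing s v₀ l)
    (hcopy : ∀ x ∈ s, v₁ (l x) = v₁ x → r x = l x) :
    #{x ∈ s | l x ≠ r x} ≤ 2 * #{x ∈ s | v₁ (l x) < v₁ x} := by
  set E := {x ∈ s | v₁ (l x) < v₁ x}
  have hsub : {x ∈ s | l x ≠ r x} ⊆ E ∪ E.image l := by
    intro x hx
    rw [mem_filter] at hx
    have hne : v₁ (l x) ≠ v₁ x := fun h => hx.2 (hcopy x hx.1 h).symm
    rcases hne.lt_or_gt with h | h
    · exact mem_union_left _ (mem_filter.2 ⟨hx.1, h⟩)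
    · refine mem_union_right _ (mem_image.2 ⟨l x, mem_filter.2 ⟨hl.mapsTo x hx.1, ?_⟩, hl.invol x hx.1⟩)
      rwa [hl.invol x hx.1]
  calc #{x ∈ s | l x ≠ r x} ≤ #(E ∪ E.image l) := card_le_card hsub
    _ ≤ #E + #(E.image l) := card_union_le _ _
    _ ≤ 2 * #E := by linarith [card_image_le (s := E) (f := l)]

theorem even_card_filter_lt_le (hl : IsPairing s v₀ l) (hr : IsPairing s v₁ r) (a : β) :
    Even #{x ∈ s | v₁ (l x) < a ∧ a ≤ v₁ x} := by
  set A := {x ∈ s | a ≤ v₁ x}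
  set K := {x ∈ A | a ≤ v₁ (l x)}
  have hA : Even #A := by
    refine (hr.of_subset (filter_subset _ s) fun x hx => ?_).even_card
    rw [mem_filter] at hx ⊢
    exact ⟨hr.mapsTo x hx.1, (hr.comp_eq x hx.1).symm ▸ hx.2⟩
  have hK : Even #K := by
    refine (hl.of_subset ((filter_subset _ A).trans (filter_subset _ s)) fun x hx => ?_).even_card
    simp only [A, mem_filter] at hx ⊢
    exact ⟨⟨hl.mapsTo x hx.1.1, hx.2⟩, (hl.invol x hx.1.1).symm ▸ hx.1.2⟩
  have : {x ∈ s | v₁ (l x) < a ∧ a ≤ v₁ x} = A \ K := by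
    ext x
    simp only [A, K, mem_filter, mem_sdiff, not_and, not_le]
    tauto
  rw [this, card_sdiff_of_subset (filter_subset _ A)]
  exact hA.tsub hK

theorem exists_slabMeeting_upperEnd (hl : IsPairing s v₀ l) (hr : IsPairing s v₁ r) {x : α}
    (hx : x ∈ s) (hdown : v₁ (l x) < v₁ x) :
    ∃ p ∈ slabMeetings s l v₀ v₁, x = upperEnd l v₁ p.1 ∨ x = upperEnd l v₁ p.2 := by
  obtain ⟨x', hx'B, hx'x⟩ : ∃ x' ∈ {y ∈ s | v₁ (l y) < v₁ x ∧ v₁ x ≤ v₁ y}, x' ≠ x := by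
    refine exists_mem_ne ?_ x
    have hpos : 0 < #{y ∈ s | v₁ (l y) < v₁ x ∧ v₁ x ≤ v₁ y} :=
      card_pos.2 ⟨x, mem_filter.2 ⟨hx, hdown, le_rfl⟩⟩
    have := even_card_filter_lt_le hl hr (v₁ x)
    rw [Nat.even_iff] at this
    omega
  obtain ⟨hx', hdown', hup'⟩ := mem_filter.1 hx'B
  have hl' := hl.mapsTo x' hx'
  suffices ∃ y ∈ s, ∃ z ∈ s, y ≠ z ∧ SlabMeeting l v₀ v₁ y z ∧ SlabMeeting l v₀ v₁ z y ∧
      x = upperEnd l v₁ y by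
    obtain ⟨y, hy, z, hz, hyz, h, h', rfl⟩ := this
    obtain ⟨p, hp, hyp | hyp⟩ := exists_mem_slabMeetings hy hz hyz h h'
    exacts [⟨p, hp, Or.inl (hyp ▸ rfl)⟩, ⟨p, hp, Or.inr (hyp ▸ rfl)⟩]
  have hupper : x = upperEnd l v₁ x := (if_pos hdown).symm
  rcases lt_trichotomy (v₀ x) (v₀ x') with h | h | h
  · have hv₀ : v₀ x < v₀ (l x') := by rwa [hl.comp_eq x' hx']
    refine ⟨x, hx, l x', hl', fun he => hv₀.ne (congrArg v₀ he), ?_, ?_, hupper⟩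
    · exact Or.inr (Or.inl ⟨hv₀, hdown'⟩)
    · exact Or.inr (Or.inr ⟨hv₀, hdown'⟩)
  · refine ⟨x, hx, x', hx', hx'x.symm, Or.inl ⟨h, ?_⟩, Or.inl ⟨h.symm, ?_⟩, hupper⟩
    · rintro rfl
      exact (hdown.trans_le hup').false
    · rintro rfl
      exact hdown'.false
  · have hv₀ : v₀ x' < v₀ (l x) := by rwa [hl.comp_eq x hx]
    have hv₁ : v₁ (l x) < v₁ x' := hdown.trans_le hup'
    refine ⟨l x, hl.mapsTo x hx, x', hx', fun he => hv₁.ne (congrArg v₁ he), ?_, ?_, ?_⟩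
    · exact Or.inr (Or.inr ⟨hv₀, hv₁⟩)
    · exact Or.inr (Or.inl ⟨hv₀, hv₁⟩)
    · rw [upperEnd, hl.invol x hx, if_neg (not_lt.2 hdown.le)]

theorem card_filter_apply_ne_le_four_mul (hl : IsPairing s v₀ l) (hr : IsPairing s v₁ r)
    (hcopy : ∀ x ∈ s, v₁ (l x) = v₁ x → r x = l x) :
    #{x ∈ s | l x ≠ r x} ≤ 4 * #(slabMeetings s l v₀ v₁) := by
  set E := {x ∈ s | v₁ (l x) < v₁ x}
  have hemit : ∀ x, ∃ p, x ∈ E → p ∈ slabMeetings s l v₀ v₁ ∧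
      (x = upperEnd l v₁ p.1 ∨ x = upperEnd l v₁ p.2) := by
    intro x
    by_cases hx : x ∈ E
    · obtain ⟨p, hp⟩ := exists_slabMeeting_upperEnd hl hr (mem_filter.1 hx).1 (mem_filter.1 hx).2
      exact ⟨p, fun _ => hp⟩
    · exact ⟨(x, x), fun h => absurd h hx⟩
  choose emit hemit using hemit
  -- a meeting is charged only by the upper ends of its two curves' `l`-pairs
  have hE : #E ≤ 2 * #(slabMeetings s l v₀ v₁) := by
    refine card_le_mul_card_image_of_maps_to (fun x hx => (hemit x hx).1) 2 fun p _ => ?_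
    refine (card_le_card (t := {upperEnd l v₁ p.1, upperEnd l v₁ p.2}) fun x hx => ?_).trans
      card_le_two
    obtain ⟨hxE, rfl⟩ := mem_filter.1 hx
    rcases (hemit x hxE).2 with h | h <;> simp [← h]
  linarith [card_filter_apply_ne_le (r := r) hl hcopy]

theorem exists_isPairing_card_le_four_mul_sum (s : Finset α) (v : ℕ → α → β) (n : ℕ)
    (hv : ∀ c ≤ n, ∀ y, Even #{x ∈ s | v c x = y})
    (hsep : ∀ x ∈ s, ∀ y ∈ s, x ≠ y → ∃ c ≤ n, v c x ≠ v c y) :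
    ∃ F : ℕ → α → α, (∀ c ≤ n, IsPairing s (v c) (F c)) ∧
      #s ≤ 4 * ∑ c ∈ range n, #(slabMeetings s (F c) (v c) (v (c + 1))) := by
  obtain ⟨F, hF, hcopy⟩ := exists_isPairing_chain s v n hv
  have hcover : s ⊆ (range n).biUnion fun c => {x ∈ s | F c x ≠ F (c + 1) x} := fun x hx => by
    obtain ⟨c, hc, hne⟩ := exists_lt_apply_ne_apply_succ hF hsep hx
    exact mem_biUnion.2 ⟨c, mem_range.2 hc, mem_filter.2 ⟨hx, hne⟩⟩
  refine ⟨F, hF, ?_⟩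
  calc #s ≤ ∑ c ∈ range n, #{x ∈ s | F c x ≠ F (c + 1) x} :=
        (card_le_card hcover).trans card_biUnion_le
    _ ≤ ∑ c ∈ range n, 4 * #(slabMeetings s (F c) (v c) (v (c + 1))) := by
        refine sum_le_sum fun c hc => ?_
        have hc := mem_range.1 hc
        exact card_filter_apply_ne_le_four_mul (hF c hc.le) (hF (c + 1) hc) (hcopy c hc)
    _ = 4 * ∑ c ∈ range n, #(slabMeetings s (F c) (v c) (v (c + 1))) := (mul_sum _ _ _).symm

end Slab

section Polynomial

theorem exists_eval_ne_of_natDegree_le {R : Type*} [CommRing R] [IsDomain R] [CharZero R]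
    {P Q : R[X]} {n : ℕ} (hP : P.natDegree ≤ n) (hQ : Q.natDegree ≤ n) (hPQ : P ≠ Q) :
    ∃ c ≤ n, P.eval (c : R) ≠ Q.eval (c : R) := by
  by_contra! h
  refine hPQ (eq_of_natDegree_lt_card_of_eval_eq P Q (f := fun i : Fin (n + 1) => ((i : ℕ) : R))
    (fun i j hij => Fin.ext (Nat.cast_injective hij)) (fun i => h i (Nat.lt_succ_iff.1 i.2)) ?_)
  simpa using max_le hP hQ

theorem aeval_intCast {A : Type*} [Ring A] (P : ℤ[X]) (m : ℤ) :
    aeval (m : A) P = ((P.eval m : ℤ) : A) := by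
  simpa using aeval_algebraMap_apply_eq_algebraMap_eval (A := A) m P

theorem exists_aeval_eq_of_crosses {P Q : ℤ[X]} (c : ℤ)
    (h : Crosses (fun P => P.eval c) (fun P => P.eval (c + 1)) P Q) :
    ∃ x ∈ Set.Ioo (c : ℝ) (c + 1), aeval x P = aeval x Q := by
  set f : ℝ → ℝ := fun x => aeval x P - aeval x Q
  have hf : ContinuousOn f (Set.Icc (c : ℝ) (c + 1)) :=
    ((Polynomial.continuous_aeval P).sub (Polynomial.continuous_aeval Q)).continuousOn
  have hc : f c = ((P.eval c - Q.eval c : ℤ) : ℝ) := by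
    simp only [f, aeval_intCast, Int.cast_sub]
  have hc1 : f (c + 1) = ((P.eval (c + 1) - Q.eval (c + 1) : ℤ) : ℝ) := by
    rw [Int.cast_sub, ← aeval_intCast, ← aeval_intCast, Int.cast_add, Int.cast_one]
  have hle : (c : ℝ) ≤ c + 1 := by linarith
  rcases h with ⟨h₀, h₁⟩ | ⟨h₀, h₁⟩ <;> dsimp only at h₀ h₁
  · obtain ⟨x, hx, hfx⟩ := intermediate_value_Ioo hle hf
      (show (0 : ℝ) ∈ Set.Ioo (f c) (f (c + 1)) by
        rw [hc, hc1]; constructor <;> norm_cast <;> omega)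
    exact ⟨x, hx, sub_eq_zero.1 hfx⟩
  · obtain ⟨x, hx, hfx⟩ := intermediate_value_Ioo' hle hf
      (show (0 : ℝ) ∈ Set.Ioo (f (c + 1)) (f c) by
        rw [hc, hc1]; constructor <;> norm_cast <;> omega)
    exact ⟨x, hx, sub_eq_zero.1 hfx⟩

theorem exists_aeval_eq_of_slabMeeting {P Q : ℤ[X]} {l : ℤ[X] → ℤ[X]} (c : ℕ)
    (h : SlabMeeting l (fun P => P.eval (c : ℤ)) (fun P => P.eval ((c + 1 : ℕ) : ℤ)) P Q) :
    ∃ x : ℝ, c ≤ x ∧ x < c + 1 ∧ aeval x P = aeval x Q ∧ ∀ m : ℤ, x = m → m = c ∧ l P ≠ Q := by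
  simp only [Nat.cast_add, Nat.cast_one] at h
  rcases h with ⟨heq, hne⟩ | hcross
  · refine ⟨c, le_rfl, by linarith, ?_, fun m hm => ⟨by exact_mod_cast hm.symm, hne⟩⟩
    rw [← Int.cast_natCast, aeval_intCast, aeval_intCast]
    exact congrArg Int.cast heq
  · obtain ⟨x, ⟨hcx, hxc⟩, hx⟩ := exists_aeval_eq_of_crosses c hcross
    refine ⟨x, hcx.le, by exact_mod_cast hxc, hx, fun m hm => ?_⟩
    rw [hm] at hcx hxc
    have : (c : ℤ) < m := by exact_mod_cast hcx
    have : m < (c : ℤ) + 1 := by exact_mod_cast hxc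
    omega

theorem exists_finset_intersections [LinearOrder ℤ[X]] (C : Finset ℤ[X])
    (F : ℕ → ℤ[X] → ℤ[X]) (n : ℕ) :
    ∃ T : Finset (ℤ[X] × ℤ[X] × ℝ),
      #T = ∑ c ∈ range n,
        #(slabMeetings C (F c) (fun P => P.eval (c : ℤ)) (fun P => P.eval ((c + 1 : ℕ) : ℤ))) ∧
      ∀ t ∈ T, t.1 ∈ C ∧ t.2.1 ∈ C ∧ t.1 < t.2.1 ∧ aeval t.2.2 t.1 = aeval t.2.2 t.2.1 ∧
        0 ≤ t.2.2 ∧ t.2.2 < n ∧ ∀ m : ℤ, t.2.2 = m → F m.toNat t.1 ≠ t.2.1 := by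
  set W := fun c : ℕ =>
    slabMeetings C (F c) (fun P => P.eval (c : ℤ)) (fun P => P.eval ((c + 1 : ℕ) : ℤ))
  have hpoint : ∀ c w, ∃ x : ℝ, w ∈ W c → c ≤ x ∧ x < c + 1 ∧ aeval x w.1 = aeval x w.2 ∧
      ∀ m : ℤ, x = m → m = c ∧ F c w.1 ≠ w.2 := by
    intro c w
    by_cases hw : w ∈ W c
    · obtain ⟨x, hx⟩ := exists_aeval_eq_of_slabMeeting c (mem_slabMeetings.1 hw).2.2.2
      exact ⟨x, fun _ => hx⟩
    · exact ⟨0, fun h => absurd h hw⟩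
  choose x hx using hpoint
  refine ⟨((range n).sigma W).image fun cw => (cw.2.1, cw.2.2, x cw.1 cw.2), ?_, ?_⟩
  · rw [card_image_of_injOn, card_sigma]
    rintro ⟨c, w⟩ hcw ⟨c', w'⟩ hcw' heq
    simp only [coe_sigma, Set.mem_sigma_iff, mem_coe, Prod.mk.injEq] at hcw hcw' heq
    obtain ⟨h₁, h₂, hxx⟩ := heq
    obtain ⟨hc, hc1, -⟩ := hx c w hcw.2
    obtain ⟨hc', hc1', -⟩ := hx c' w' hcw'.2
    rw [hxx] at hc hc1
    have : c < c' + 1 := by exact_mod_cast hc.trans_lt hc1'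
    have : c' < c + 1 := by exact_mod_cast hc'.trans_lt hc1
    obtain rfl : c = c' := by omega
    obtain rfl : w = w' := Prod.ext h₁ h₂
    rfl
  · rintro t ht
    obtain ⟨⟨c, w⟩, hcw, rfl⟩ := mem_image.1 ht
    obtain ⟨hc, hw⟩ := mem_sigma.1 hcw
    obtain ⟨hw₁, hw₂, hlt, -⟩ := mem_slabMeetings.1 hw
    obtain ⟨hcx, hxc, hmeet, hint⟩ := hx c w hw
    have hcn : (c : ℝ) + 1 ≤ n := by exact_mod_cast mem_range.1 hc
    refine ⟨hw₁, hw₂, hlt, hmeet, (Nat.cast_nonneg c).trans hcx, by linarith, fun m hm => ?_⟩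
    obtain ⟨rfl, hne⟩ := hint m hm
    simpa using hne

end Polynomial

/-- If C is a bad (q,q,k)-arrangement (columns 0,...,q−1 all bad for the k curves of C,
polynomials over ℤ of degree ≤ q−1), then for each bad column c one can partition C into
k/2 pairs of curves agreeing at c, and furthermore there are at least ⌈k/4⌉ additional
intersections (pairs of distinct curves agreeing at a real point x with 0 ≤ x < q−1, i.e.
between columns or on a column other than the last), each distinct from the chosen
per-column pairings and from one another as unordered intersections. -/
theorem stmt_15 (q k : ℕ) (hq : 2 ≤ q)
    (C : Finset (Polynomial ℤ)) (hcard : C.card = k)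
    (hdeg : ∀ P ∈ C, P.natDegree ≤ q - 1)
    (hbad : ∀ c : ℤ, 0 ≤ c → c ≤ (q : ℤ) - 1 → ∀ y : ℤ,
      Even ((C.filter (fun P => P.eval c = y)).card)) :
    ∃ pairing : ℤ → Polynomial ℤ → Polynomial ℤ,
      (∀ c : ℤ, 0 ≤ c → c ≤ (q : ℤ) - 1 → ∀ P ∈ C,
        pairing c P ∈ C ∧ pairing c P ≠ P ∧ pairing c (pairing c P) = P ∧
          (pairing c P).eval c = P.eval c) ∧
      ∃ T : Finset (Polynomial ℤ × Polynomial ℤ × ℝ),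
        (k + 3) / 4 ≤ T.card ∧
        (∀ t ∈ T, t.1 ∈ C ∧ t.2.1 ∈ C ∧ t.1 ≠ t.2.1 ∧
          Polynomial.aeval t.2.2 t.1 = Polynomial.aeval t.2.2 t.2.1 ∧
          0 ≤ t.2.2 ∧ t.2.2 < (q : ℝ) - 1 ∧
          (∀ c : ℤ, t.2.2 = (c : ℝ) → pairing c t.1 ≠ t.2.1)) ∧
        (∀ t ∈ T, ∀ t' ∈ T, t ≠ t' →
          ¬ (t.1 = t'.2.1 ∧ t.2.1 = t'.1 ∧ t.2.2 = t'.2.2)) := by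
  classical
  -- any linear order on `ℤ[X]` orients the intersections, so that none is recorded twice
  let : LinearOrder ℤ[X] := IsWellOrder.linearOrder WellOrderingRel
  obtain ⟨F, hF, hcount⟩ := exists_isPairing_card_le_four_mul_sum C
    (fun c P => P.eval (c : ℤ)) (q - 1) (fun c hc y => hbad c (by positivity) (by omega) y)
    fun P hP Q hQ hPQ => exists_eval_ne_of_natDegree_le (hdeg P hP) (hdeg Q hQ) hPQ
  obtain ⟨T, hTcard, hT⟩ := exists_finset_intersections C F (q - 1)
  have hq1 : ((q - 1 : ℕ) : ℝ) = q - 1 := by rw [Nat.cast_sub (by omega), Nat.cast_one]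
  refine ⟨fun c => F c.toNat, fun c hc₀ hcq P hP => ?_, T, by omega, fun t ht => ?_, ?_⟩
  · obtain ⟨hmem, hne, hinv, heval⟩ := hF c.toNat (by omega)
    refine ⟨hmem P hP, hne P hP, hinv P hP, ?_⟩
    simpa [Int.toNat_of_nonneg hc₀] using heval P hP
  · obtain ⟨h₁, h₂, hlt, hmeet, h₀, hx, hint⟩ := hT t ht
    exact ⟨h₁, h₂, ne_of_lt hlt, hmeet, h₀, hq1 ▸ hx, hint⟩
  · rintro t ht t' ht' - ⟨h₁, h₂, -⟩
    exact lt_asymm (hT t ht).2.2.1 (h₁ ▸ h₂ ▸ (hT t' ht').2.2.1)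
end

section
/- Let S be a set of 2d−1 or fewer distinct keys (a,b) ∈ ℕ², and let D_i(a,b) = a + b·i for i ∈ {0,...,d−1}. Then the derivation incidence matrix M_{D,S} has full row rank over GF(2). Consequently, if the tables T_0,...,T_{d−1} are filled with independent uniform random values in GF(2)^ℓ, the hash values h(a,b) = T_0(D_0(a,b)) XOR ... XOR T_{d−1}(D_{d−1}(a,b)) for (a,b) ∈ S are uniformly and independently distributed. -/
/-!
If the rows of a set `A` of keys sum to zero over GF(2), every value of every `Dᵢ` is taken an
even number of times on `A`, so the maximum and the minimum of each `Dᵢ` on `A` are attained at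
least twice. For `i < j`, a maximizer of `Dᵢ` has second coordinate at most that of any maximizer
of `Dⱼ`; hence the maximizers of `D₀, …, D_{d-1}` contain `d + 1` keys with distinct second
coordinates, and so do the minimizers. A key maximizing some `Dᵢ` and minimizing another `Dⱼ`
has extreme second coordinate, so the two families share at most two keys and `2d ≤ |A|`.
(Geometrically: the convex hull of `A` has an edge of each slope `i` on top and on the bottom.)

Full row rank makes the hash a surjective GF(2)-linear map of the tables, and all fibres of a
surjective homomorphism of finite groups have the same size.
-/

open Finset OrderDual

namespace Finset

variable {α β : Type*} [LinearOrder β] {s : Finset α} {f : α → β} {a : α}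

def maximizers (s : Finset α) (f : α → β) : Finset α :=
  s.filter fun a => ∀ b ∈ s, f b ≤ f a

def minimizers (s : Finset α) (f : α → β) : Finset α :=
  s.maximizers (toDual ∘ f)

@[simp]
theorem mem_maximizers : a ∈ s.maximizers f ↔ a ∈ s ∧ ∀ b ∈ s, f b ≤ f a :=
  mem_filter

@[simp]
theorem mem_minimizers : a ∈ s.minimizers f ↔ a ∈ s ∧ ∀ b ∈ s, f a ≤ f b := by
  simp [minimizers]

theorem maximizers_subset (s : Finset α) (f : α → β) : s.maximizers f ⊆ s :=
  filter_subset _ _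

theorem minimizers_subset (s : Finset α) (f : α → β) : s.minimizers f ⊆ s :=
  filter_subset _ _

theorem two_le_card_maximizers (hs : s.Nonempty)
    (heven : ∀ a ∈ s, Even #{b ∈ s | f b = f a}) : 2 ≤ #(s.maximizers f) := by
  obtain ⟨a, ha, hmax⟩ := s.exists_max_image f hs
  have hlevel : s.maximizers f = {b ∈ s | f b = f a} := by
    ext b
    simp only [mem_maximizers, mem_filter]
    exact and_congr_right fun hb =>
      ⟨fun h => le_antisymm (hmax b hb) (h a ha), fun h c hc => h ▸ hmax c hc⟩
  have hpos : 0 < #(s.maximizers f) := card_pos.mpr ⟨a, mem_maximizers.mpr ⟨ha, hmax⟩⟩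
  obtain ⟨r, hr⟩ := hlevel ▸ heven a ha
  omega

theorem two_le_card_minimizers (hs : s.Nonempty)
    (heven : ∀ a ∈ s, Even #{b ∈ s | f b = f a}) : 2 ≤ #(s.minimizers f) :=
  two_le_card_maximizers hs fun a ha => by simpa using heven a ha

end Finset

theorem add_one_le_card_biUnion_of_chain {α β : Type*} [DecidableEq α] [LinearOrder β]
    (f : α → β) (M : ℕ → Finset α) {d : ℕ} (hd : d ≠ 0)
    (hinj : ∀ i j, ∀ p ∈ M i, ∀ q ∈ M j, f p = f q → p = q)
    (htwo : ∀ i < d, 1 < #(M i))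
    (hchain : ∀ i j, i < j → j < d → ∀ p ∈ M i, ∀ q ∈ M j, f p ≤ f q) :
    d + 1 ≤ #((range d).biUnion M) := by
  induction d with
  | zero => exact absurd rfl hd
  | succ d ih =>
    rcases Nat.eq_zero_or_pos d with rfl | hd
    · rw [range_one, singleton_biUnion]
      exact htwo 0 one_pos
    have hprev := ih hd.ne' (fun i hi => htwo i (by omega))
      fun i j hij hj => hchain i j hij (by omega)
    obtain ⟨p, hp, q, hq, hpq⟩ := one_lt_card.mp (htwo d (by omega))
    have hfpq : f p ≠ f q := fun h => hpq (hinj d d p hp q hq h)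
    obtain ⟨r, hr, hnew⟩ : ∃ r ∈ M d, ∀ x ∈ (range d).biUnion M, f x < f r := by
      have hbelow : ∀ x ∈ (range d).biUnion M, ∀ y ∈ M d, f x ≤ f y := by
        simp only [mem_biUnion, mem_range]
        rintro x ⟨i, hi, hx⟩ y hy
        exact hchain i d hi (by omega) x hx y hy
      rcases hfpq.lt_or_gt with h | h
      · exact ⟨q, hq, fun x hx => (hbelow x hx p hp).trans_lt h⟩
      · exact ⟨p, hp, fun x hx => (hbelow x hx q hq).trans_lt h⟩
    have hsub : insert r ((range d).biUnion M) ⊆ (range (d + 1)).biUnion M := by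
      rw [range_add_one, biUnion_insert]
      exact insert_subset (mem_union_left _ hr) subset_union_right
    calc d + 1 + 1 ≤ #((range d).biUnion M) + 1 := by omega
      _ = #(insert r ((range d).biUnion M)) :=
        (card_insert_of_notMem fun h => (hnew r h).false).symm
      _ ≤ _ := card_le_card hsub

def derivedChar (i : ℕ) (p : ℕ × ℕ) : ℕ := p.1 + p.2 * i

section DerivedChar

variable {p q : ℕ × ℕ} {i j : ℕ}

theorem snd_le_snd_of_derivedChar_le (hij : i < j) (hi : derivedChar i q ≤ derivedChar i p)
    (hj : derivedChar j p ≤ derivedChar j q) : p.2 ≤ q.2 := by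
  unfold derivedChar at hi hj
  by_contra! h
  nlinarith

theorem eq_of_derivedChar_le_of_snd_eq (hi : derivedChar i q ≤ derivedChar i p)
    (hj : derivedChar j p ≤ derivedChar j q) (h : p.2 = q.2) : p = q := by
  unfold derivedChar at hi hj
  rw [h] at hi hj
  exact Prod.ext (by omega) h

theorem eq_of_derivedChar_eq_of_ne (hij : i ≠ j) (hi : derivedChar i p = derivedChar i q)
    (hj : derivedChar j p = derivedChar j q) : p = q := by
  wlog hlt : i < j generalizing i j
  · exact this hij.symm hj hi (by omega)
  have h : p.2 = q.2 := le_antisymm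
    (snd_le_snd_of_derivedChar_le hlt hi.ge hj.le)
    (snd_le_snd_of_derivedChar_le hlt hi.le hj.ge)
  exact eq_of_derivedChar_le_of_snd_eq hi.ge hj.le h

end DerivedChar

/-- The rows of the keys in `A` sum to zero over GF(2) iff `A` has even levels. -/
def EvenLevels (A : Finset (ℕ × ℕ)) (d : ℕ) : Prop :=
  ∀ i < d, ∀ p ∈ A, Even #{q ∈ A | derivedChar i q = derivedChar i p}

section ExtremeKeys

variable {A : Finset (ℕ × ℕ)} {p q : ℕ × ℕ} {i j k d : ℕ}

theorem eq_of_mem_maximizers_of_snd_eq (hp : p ∈ A.maximizers (derivedChar i))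
    (hq : q ∈ A.maximizers (derivedChar j)) (h : p.2 = q.2) : p = q :=
  eq_of_derivedChar_le_of_snd_eq ((mem_maximizers.1 hp).2 q (mem_maximizers.1 hq).1)
    ((mem_maximizers.1 hq).2 p (mem_maximizers.1 hp).1) h

theorem eq_of_mem_minimizers_of_snd_eq (hp : p ∈ A.minimizers (derivedChar i))
    (hq : q ∈ A.minimizers (derivedChar j)) (h : p.2 = q.2) : p = q :=
  (eq_of_derivedChar_le_of_snd_eq ((mem_minimizers.1 hp).2 q (mem_minimizers.1 hq).1)
    ((mem_minimizers.1 hq).2 p (mem_minimizers.1 hp).1) h.symm).symm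

theorem snd_le_snd_of_mem_maximizers (hij : i < j) (hp : p ∈ A.maximizers (derivedChar i))
    (hq : q ∈ A.maximizers (derivedChar j)) : p.2 ≤ q.2 :=
  snd_le_snd_of_derivedChar_le hij ((mem_maximizers.1 hp).2 q (mem_maximizers.1 hq).1)
    ((mem_maximizers.1 hq).2 p (mem_maximizers.1 hp).1)

theorem snd_le_snd_of_mem_minimizers (hij : i < j) (hp : p ∈ A.minimizers (derivedChar i))
    (hq : q ∈ A.minimizers (derivedChar j)) : q.2 ≤ p.2 :=
  snd_le_snd_of_derivedChar_le hij ((mem_minimizers.1 hp).2 q (mem_minimizers.1 hq).1)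
    ((mem_minimizers.1 hq).2 p (mem_minimizers.1 hp).1)

theorem card_maximizers_le_one_of_mem_minimizers (hki : k ≠ i)
    (hp : p ∈ A.maximizers (derivedChar i)) (hp' : p ∈ A.minimizers (derivedChar i)) :
    #(A.maximizers (derivedChar k)) ≤ 1 := by
  have hconst : ∀ q ∈ A, derivedChar i q = derivedChar i p := fun q hq =>
    le_antisymm ((mem_maximizers.1 hp).2 q hq) ((mem_minimizers.1 hp').2 q hq)
  refine card_le_one.2 fun q hq r hr => eq_of_derivedChar_eq_of_ne hki ?_ ?_
  · exact le_antisymm ((mem_maximizers.1 hr).2 q (mem_maximizers.1 hq).1)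
      ((mem_maximizers.1 hq).2 r (mem_maximizers.1 hr).1)
  · rw [hconst q (mem_maximizers.1 hq).1, hconst r (mem_maximizers.1 hr).1]

theorem snd_extreme_of_mem_maximizers_of_mem_minimizers (hij : i ≠ j)
    (hp : p ∈ A.maximizers (derivedChar i)) (hp' : p ∈ A.minimizers (derivedChar j)) :
    (∀ q ∈ A, p.2 ≤ q.2) ∨ ∀ q ∈ A, q.2 ≤ p.2 := by
  rcases hij.lt_or_gt with h | h
  · exact .inl fun q hq => snd_le_snd_of_derivedChar_le h
      ((mem_maximizers.1 hp).2 q hq) ((mem_minimizers.1 hp').2 q hq)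
  · exact .inr fun q hq => snd_le_snd_of_derivedChar_le h
      ((mem_minimizers.1 hp').2 q hq) ((mem_maximizers.1 hp).2 q hq)

theorem add_one_le_card_biUnion_maximizers (hA : A.Nonempty) (heven : EvenLevels A d)
    (hd : d ≠ 0) : d + 1 ≤ #((range d).biUnion fun i => A.maximizers (derivedChar i)) :=
  add_one_le_card_biUnion_of_chain Prod.snd _ hd
    (fun _ _ _ hp _ hq => eq_of_mem_maximizers_of_snd_eq hp hq)
    (fun i hi => two_le_card_maximizers hA (heven i hi))
    fun _ _ hij _ _ hp _ hq => snd_le_snd_of_mem_maximizers hij hp hq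

theorem add_one_le_card_biUnion_minimizers (hA : A.Nonempty) (heven : EvenLevels A d)
    (hd : d ≠ 0) : d + 1 ≤ #((range d).biUnion fun i => A.minimizers (derivedChar i)) :=
  add_one_le_card_biUnion_of_chain (toDual ∘ Prod.snd) _ hd
    (fun _ _ _ hp _ hq h => eq_of_mem_minimizers_of_snd_eq hp hq (toDual_inj.1 h))
    (fun i hi => two_le_card_minimizers hA (heven i hi))
    fun _ _ hij _ _ hp _ hq => toDual_le_toDual.2 (snd_le_snd_of_mem_minimizers hij hp hq)

theorem card_inter_biUnion_maximizers_minimizers_le_two (hA : A.Nonempty)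
    (heven : EvenLevels A d) (hd : 2 ≤ d) :
    #(((range d).biUnion fun i => A.maximizers (derivedChar i)) ∩
      (range d).biUnion fun i => A.minimizers (derivedChar i)) ≤ 2 := by
  refine (card_le_card_of_injOn Prod.snd (t := {A.inf' hA Prod.snd, A.sup' hA Prod.snd})
    ?_ ?_).trans card_le_two
  · intro p hp
    simp only [coe_inter, Set.mem_inter_iff, mem_coe, mem_biUnion, mem_range] at hp
    obtain ⟨⟨i, -, hpi⟩, ⟨j, -, hpj⟩⟩ := hp
    have hij : i ≠ j := by
      rintro rfl
      obtain ⟨k, hk, hki⟩ : ∃ k < d, k ≠ i :=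
        ⟨if i = 0 then 1 else 0, by split_ifs <;> omega⟩
      have := two_le_card_maximizers hA (heven k hk)
      have := card_maximizers_le_one_of_mem_minimizers hki hpi hpj
      omega
    have hpA := maximizers_subset _ _ hpi
    simp only [coe_insert, coe_singleton, Set.mem_insert_iff, Set.mem_singleton_iff]
    rcases snd_extreme_of_mem_maximizers_of_mem_minimizers hij hpi hpj with h | h
    · exact .inl (le_antisymm (le_inf' hA _ h) (inf'_le _ hpA))
    · exact .inr (le_antisymm (le_sup' _ hpA) (sup'_le hA _ h))
  · intro p hp q hq h
    simp only [coe_inter, Set.mem_inter_iff, mem_coe, mem_biUnion, mem_range] at hp hq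
    obtain ⟨⟨i, -, hpi⟩, -⟩ := hp
    obtain ⟨⟨j, -, hqj⟩, -⟩ := hq
    exact eq_of_mem_maximizers_of_snd_eq hpi hqj h

theorem two_mul_le_card_of_evenLevels (hA : A.Nonempty) (heven : EvenLevels A d) :
    2 * d ≤ #A := by
  rcases Nat.eq_zero_or_pos d with rfl | hd
  · simp
  have hU := add_one_le_card_biUnion_maximizers hA heven hd.ne'
  have hUA : (range d).biUnion (fun i => A.maximizers (derivedChar i)) ⊆ A :=
    biUnion_subset.2 fun _ _ => maximizers_subset _ _
  rcases Nat.lt_or_ge d 2 with hd1 | hd2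
  · have := card_le_card hUA
    omega
  have hLA : (range d).biUnion (fun i => A.minimizers (derivedChar i)) ⊆ A :=
    biUnion_subset.2 fun _ _ => minimizers_subset _ _
  have hL := add_one_le_card_biUnion_minimizers hA heven hd.ne'
  have hUL := card_inter_biUnion_maximizers_minimizers_le_two hA heven hd2
  have := card_union_add_card_inter ((range d).biUnion fun i => A.maximizers (derivedChar i))
    ((range d).biUnion fun i => A.minimizers (derivedChar i))
  have := card_le_card (union_subset hUA hLA)
  omega

theorem exists_odd_card_level (hA : A.Nonempty) (hcard : #A ≤ 2 * d - 1) :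
    ∃ i < d, ∃ p ∈ A, Odd #{q ∈ A | derivedChar i q = derivedChar i p} := by
  by_contra! h
  have := two_mul_le_card_of_evenLevels hA fun i hi p hp => Nat.not_odd_iff_even.1 (h i hi p hp)
  have := hA.card_pos
  omega

end ExtremeKeys

theorem linearIndepOn_zmod_two {ι M : Type*} [AddCommGroup M] [Module (ZMod 2) M] {v : ι → M}
    {s : Finset ι} (h : ∀ t ⊆ s, t.Nonempty → ∑ i ∈ t, v i ≠ 0) :
    LinearIndepOn (ZMod 2) v (s : Set ι) := by
  classical
  rw [linearIndepOn_finset_iff]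
  intro g hg i hi
  by_contra hgi
  refine h {j ∈ s | g j ≠ 0} (filter_subset _ _) ⟨i, mem_filter.2 ⟨hi, hgi⟩⟩ ?_
  calc ∑ j ∈ s with g j ≠ 0, v j = ∑ j ∈ s with g j ≠ 0, g j • v j :=
        sum_congr rfl fun j hj => by
          rw [(by decide : ∀ z : ZMod 2, z ≠ 0 → z = 1) _ (mem_filter.1 hj).2, one_smul]
    _ = ∑ j ∈ s, g j • v j := sum_filter_of_ne fun j _ hj hg0 => hj (by rw [hg0, zero_smul])
    _ = 0 := hg

/-- The row of the key `p` in the incidence matrix `M_{D,S}`. -/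
def incidenceRow (K : Type*) [Zero K] [One K] (d N : ℕ) (p : ℕ × ℕ) : Fin d × Fin N → K :=
  fun c => if derivedChar c.1 p = c.2 then 1 else 0

theorem linearIndepOn_incidenceRow {S : Finset (ℕ × ℕ)} {d N : ℕ} (hS : #S ≤ 2 * d - 1)
    (hN : ∀ p ∈ S, ∀ i : Fin d, derivedChar i p < N) :
    LinearIndepOn (ZMod 2) (incidenceRow (ZMod 2) d N) (S : Set (ℕ × ℕ)) := by
  refine linearIndepOn_zmod_two fun t ht htne hsum => ?_
  obtain ⟨i, hi, p, hp, hodd⟩ := exists_odd_card_level htne ((card_le_card ht).trans hS)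
  have := congrFun hsum (⟨i, hi⟩, ⟨derivedChar i p, hN p (ht hp) ⟨i, hi⟩⟩)
  simp only [Finset.sum_apply, incidenceRow, sum_boole, Pi.zero_apply,
    ZMod.natCast_eq_zero_iff_even] at this
  exact Nat.not_even_iff_odd.2 hodd this

theorem Matrix.mulVec_surjective_of_linearIndependent_row {m n K : Type*} [Fintype m]
    [Fintype n] [Field K] {M : Matrix m n K} (h : LinearIndependent K M.row) :
    Function.Surjective M.mulVec := by
  classical
  have hrange : LinearMap.range M.mulVecLin = ⊤ := Submodule.eq_top_of_finrank_eq <| by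
    rw [← Matrix.rank, h.rank_matrix, Module.finrank_fintype_fun_eq_card]
  exact fun y => LinearMap.range_eq_top.mp hrange y

def tabulationHash {V : Type*} [AddCommMonoid V] {d N : ℕ} (T : Fin d → Fin N → V)
    (p : ℕ × ℕ) : V :=
  ∑ i : Fin d, if h : derivedChar i p < N then T i ⟨derivedChar i p, h⟩ else 0

theorem tabulationHash_add {V : Type*} [AddCommMonoid V] {d N : ℕ} (T T' : Fin d → Fin N → V)
    (p : ℕ × ℕ) : tabulationHash (T + T') p = tabulationHash T p + tabulationHash T' p := by
  simp only [tabulationHash, ← sum_add_distrib]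
  refine sum_congr rfl fun i _ => ?_
  split_ifs <;> simp

theorem surjective_tabulationHash {K ι : Type*} [Field K] {S : Finset (ℕ × ℕ)} {d N : ℕ}
    (hN : ∀ p ∈ S, ∀ i : Fin d, derivedChar i p < N)
    (hS : LinearIndepOn K (incidenceRow K d N) (S : Set (ℕ × ℕ))) :
    Function.Surjective fun (T : Fin d → Fin N → ι → K) (x : S) => tabulationHash T x := by
  classical
  set M : Matrix S (Fin d × Fin N) K := .of fun x => incidenceRow K d N x
  have hM : ∀ t x, M.mulVec t x = ∑ i, t (i, ⟨derivedChar i x, hN x x.2 i⟩) := by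
    intro t x
    simp only [M, Matrix.mulVec, dotProduct, Fintype.sum_prod_type, Matrix.of_apply,
      incidenceRow, ite_mul, one_mul, zero_mul]
    refine sum_congr rfl fun i _ => ?_
    rw [Fintype.sum_eq_single ⟨derivedChar i x, hN x x.2 i⟩
      fun v hv => if_neg fun h => hv (Fin.ext h.symm)]
    exact if_pos rfl
  have hsurj : Function.Surjective M.mulVec := M.mulVec_surjective_of_linearIndependent_row hS
  intro y
  choose t ht using fun k => hsurj fun x => y x k
  refine ⟨fun i v k => t k (i, v), funext fun x => funext fun k => ?_⟩
  show tabulationHash (V := ι → K) _ x k = _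
  rw [← show M.mulVec (t k) x = y x k from congrFun (ht k) x, hM]
  simp [tabulationHash, dif_pos (hN x x.2 _)]

theorem AddMonoidHom.card_fiber_div_card_of_surjective {G H : Type*} [AddGroup G] [Fintype G]
    [AddGroup H] [Fintype H] [DecidableEq H] (f : G →+ H) (hf : Function.Surjective f) (y : H) :
    (#{g | f g = y} : ℚ) / Fintype.card G = 1 / Fintype.card H := by
  have hcard : Fintype.card G = Fintype.card H * #{g | f g = y} := by
    rw [← card_univ, card_eq_sum_card_fiberwise (f := f) (t := univ) fun _ _ => mem_univ _,
      sum_congr rfl fun z _ => card_fiber_eq_of_mem_range f (hf z) (hf y), sum_const, card_univ,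
      smul_eq_mul]
  have hpos : (#{g | f g = y} : ℚ) ≠ 0 := by
    obtain ⟨g, rfl⟩ := hf y
    exact Nat.cast_ne_zero.2 (card_ne_zero_of_mem (mem_filter.2 ⟨mem_univ g, rfl⟩))
  rw [hcard, Nat.cast_mul, div_mul_cancel_right₀ hpos, one_div]

theorem card_filter_tabulationHash_eq_div {K ι : Type*} [Field K] [Fintype K] [DecidableEq K]
    [Fintype ι] [DecidableEq ι] {S : Finset (ℕ × ℕ)} {d N : ℕ}
    (hN : ∀ p ∈ S, ∀ i : Fin d, derivedChar i p < N)
    (hS : LinearIndepOn K (incidenceRow K d N) (S : Set (ℕ × ℕ)))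
    (Y : ℕ × ℕ → ι → K) :
    (#{T : Fin d → Fin N → ι → K | ∀ p ∈ S, tabulationHash T p = Y p} : ℚ) /
      Fintype.card (Fin d → Fin N → ι → K) = 1 / Fintype.card (S → ι → K) := by
  let hash : (Fin d → Fin N → ι → K) →+ (S → ι → K) :=
    AddMonoidHom.mk' (fun T x => tabulationHash T x) fun T T' =>
      funext (tabulationHash_add T T' ·)
  convert hash.card_fiber_div_card_of_surjective (surjective_tabulationHash hN hS) (Y ·) using 4
  ext T
  simp [hash, funext_iff]

theorem stmt_18_general (d ℓ N : ℕ)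
    (S : Finset (ℕ × ℕ)) (hS : S.card ≤ 2 * d - 1)
    (hN : ∀ p ∈ S, ∀ i : Fin d, p.1 + p.2 * i.1 < N) :
    LinearIndependent (ZMod 2)
      (fun x : S => fun col : Fin d × ℕ =>
        if x.1.1 + x.1.2 * col.1.1 = col.2 then (1 : ZMod 2) else 0) ∧
    ∀ Y : ℕ × ℕ → Fin ℓ → ZMod 2,
      ((Finset.univ.filter (fun T : Fin d → Fin N → Fin ℓ → ZMod 2 =>
          ∀ p ∈ S,
            (∑ i : Fin d,
              if h : p.1 + p.2 * i.1 < N then T i ⟨p.1 + p.2 * i.1, h⟩ else 0) = Y p)).card : ℚ)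
        / ((Finset.univ : Finset (Fin d → Fin N → Fin ℓ → ZMod 2)).card : ℚ)
        = 1 / 2 ^ (ℓ * S.card) := by
  have hrows := linearIndepOn_incidenceRow hS hN
  refine ⟨?_, fun Y => ?_⟩
  · have hfull : LinearIndepOn (ZMod 2)
        (fun p (c : Fin d × ℕ) => if derivedChar c.1 p = c.2 then (1 : ZMod 2) else 0)
        (S : Set (ℕ × ℕ)) :=
      .of_comp (LinearMap.funLeft (ZMod 2) (ZMod 2) fun c : Fin d × Fin N => (c.1, c.2.val))
        hrows
    exact hfull
  have hcard : Fintype.card (S → Fin ℓ → ZMod 2) = 2 ^ (ℓ * #S) := by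
    simp [ZMod.card, ← pow_mul]
  rw [card_univ]
  exact_mod_cast hcard ▸ card_filter_tabulationHash_eq_div hN hrows Y

/-- For a set S of at most 2d−1 distinct keys (a,b) ∈ ℕ² with derived characters
D_i(a,b) = a + b·i (i < d), the derivation incidence matrix has full row rank over GF(2)
(its rows are linearly independent); consequently, if the tables T_0,...,T_{d−1} are
filled with independent uniform random values in GF(2)^ℓ, then the hash values
h(a,b) = T_0(D_0(a,b)) ⊕ ⋯ ⊕ T_{d−1}(D_{d−1}(a,b)) of the keys in S are uniformly and
independently distributed: every tuple Y of values is attained with probability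
1/2^{ℓ·|S|}. (N bounds the table size; all derived characters of S lie below N.) -/
theorem stmt_18 (d ℓ N : ℕ) (hd : 1 ≤ d) (hℓ : 1 ≤ ℓ)
    (S : Finset (ℕ × ℕ)) (hS : S.card ≤ 2 * d - 1)
    (hN : ∀ p ∈ S, ∀ i : Fin d, p.1 + p.2 * i.1 < N) :
    LinearIndependent (ZMod 2)
      (fun x : S => fun col : Fin d × ℕ =>
        if x.1.1 + x.1.2 * col.1.1 = col.2 then (1 : ZMod 2) else 0) ∧
    ∀ Y : ℕ × ℕ → Fin ℓ → ZMod 2,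
      ((Finset.univ.filter (fun T : Fin d → Fin N → Fin ℓ → ZMod 2 =>
          ∀ p ∈ S,
            (∑ i : Fin d,
              if h : p.1 + p.2 * i.1 < N then T i ⟨p.1 + p.2 * i.1, h⟩ else 0) = Y p)).card : ℚ)
        / ((Finset.univ : Finset (Fin d → Fin N → Fin ℓ → ZMod 2)).card : ℚ)
        = 1 / 2 ^ (ℓ * S.card) :=
  stmt_18_general d ℓ N S hS hN
end
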